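/- arXiv:2602.16104 — 3 statements merged into one kernel-verified Lean document; each statement's English description precedes it below -/
import Mathlib

section
/- Let P be a lattice polytope in ℝ² and let Δ₂ = conv{(0,0),(1,0),(0,1)} be the standard 2-simplex. Then V(P,Δ₂) equals the smallest non-negative integer δ such that P + t ⊆ δ·Δ₂ for some lattice translation vector t ∈ ℤ². -/
open MeasureTheory Pointwise

/-- Normalized mixed area of two compact convex sets in ℝ². -/
noncomputable def mixedArea (P Q : Set (ℝ × ℝ)) : ℝ :=
  (volume (P + Q)).toReal - (volume P).toReal - (volume Q).toReal

/-- Embedding of ℤ² into ℝ². -/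
def latticeEmbed (p : ℤ × ℤ) : ℝ × ℝ := ((p.1 : ℝ), (p.2 : ℝ))

/-- A lattice polytope in ℝ² is the convex hull of a finite nonempty set of lattice points. -/
def IsLatticePolytope (P : Set (ℝ × ℝ)) : Prop :=
  ∃ S : Finset (ℤ × ℤ), S.Nonempty ∧ P = convexHull ℝ (latticeEmbed '' (S : Set (ℤ × ℤ)))

/-- The standard 2-simplex `Δ₂ = conv{(0,0),(1,0),(0,1)}` in ℝ². -/
def stdTriangle : Set (ℝ × ℝ) :=
  convexHull ℝ {((0 : ℝ), (0 : ℝ)), ((1 : ℝ), (0 : ℝ)), ((0 : ℝ), (1 : ℝ))}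


/-!
Slice `ℝ²` vertically. A compact convex `K` whose `x`-range is `[a, a']` has slices
`[g x, h x]` with `g` convex and `h` concave, and `vol K = ∫ (h - g)`. The slice of `K + Δ₂` at `x`
is `[min g, max (h + id) + 1 - x]`, both extrema taken over the window `[x - 1, x] ∩ [a, a']`.
Since `-g` and `h + id` are concave they are unimodal, so each window extremum is attained at
the point of the window nearest to the global extremum; integrating over `[a, a' + 1]` then gives
`∫ g + min g` and `∫ (h + id) + max (h + id)`. With `b = min y` and `c = max (x + y)` on `K`
this yields `vol (K + Δ₂) = vol K + 1/2 + (c - a - b)`, i.e. `V(K, Δ₂) = c - a - b`.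

On the other hand, `K + t ⊆ δ Δ₂` says exactly `a + t₁ ≥ 0`, `b + t₂ ≥ 0` and
`c + t₁ + t₂ ≤ δ`. For a lattice polytope `a`, `b`, `c` are integers, so the least such `δ`
is `c - a - b`, attained at `t = (-a, -b)`.
-/

open Set

/-- The point of `[x - 1, x]` nearest to `t`. -/
def nearestInWindow (t x : ℝ) : ℝ := max (x - 1) (min x t)

lemma nearestInWindow_mem_Icc_sub_one (t x : ℝ) : nearestInWindow t x ∈ Icc (x - 1) x :=
  ⟨le_max_left _ _, max_le (by linarith) (min_le_left _ _)⟩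

lemma nearestInWindow_mem_Icc {t x a b : ℝ} (ht : t ∈ Icc a b) (hx : x ∈ Icc a (b + 1)) :
    nearestInWindow t x ∈ Icc a b :=
  ⟨le_max_of_le_right (le_min hx.1 ht.1),
    max_le (by linarith [hx.2]) ((min_le_right _ _).trans ht.2)⟩

lemma nearestInWindow_mem_uIcc {t x u : ℝ} (hxu : x - 1 ≤ u) (hux : u ≤ x) :
    nearestInWindow t x ∈ uIcc u t := by
  rw [nearestInWindow, mem_uIcc]
  rcases le_total u t with h | h
  · exact .inl ⟨le_max_of_le_right (le_min hux h), max_le (by linarith) (min_le_right _ _)⟩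
  · exact .inr ⟨le_max_of_le_right (le_min (h.trans hux) le_rfl),
      max_le hxu ((min_le_right _ _).trans h)⟩

/-- On `[a, t]`, `[t, t + 1]` and `[t + 1, b + 1]` the function `nearestInWindow t` is `x`,
the constant `t` and `x - 1` respectively. -/
lemma intervalIntegrable_and_integral_comp_nearestInWindow {φ : ℝ → ℝ} {a b t : ℝ}
    (hat : a ≤ t) (htb : t ≤ b) (hφ : IntervalIntegrable φ volume a b) :
    IntervalIntegrable (fun x ↦ φ (nearestInWindow t x)) volume a (b + 1) ∧
      ∫ x in a..b + 1, φ (nearestInWindow t x) = (∫ x in a..b, φ x) + φ t := by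
  have h₁ : EqOn (fun x ↦ φ (nearestInWindow t x)) φ (uIcc a t) := by
    intro x hx
    rw [uIcc_of_le hat] at hx
    simp [nearestInWindow, hx.2]
  have h₂ : EqOn (fun x ↦ φ (nearestInWindow t x)) (fun _ ↦ φ t) (uIcc t (t + 1)) := by
    intro x hx
    rw [uIcc_of_le (by linarith)] at hx
    simp [nearestInWindow, hx.1, show x - 1 ≤ t by linarith [hx.2]]
  have h₃ : EqOn (fun x ↦ φ (nearestInWindow t x)) (fun x ↦ φ (x - 1))
      (uIcc (t + 1) (b + 1)) := by
    intro x hx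
    rw [uIcc_of_le (by linarith)] at hx
    simp [nearestInWindow, show t ≤ x by linarith [hx.1], show t ≤ x - 1 by linarith [hx.1]]
  have hφ₁ : IntervalIntegrable φ volume a t :=
    hφ.mono_set (uIcc_subset_uIcc left_mem_uIcc (mem_uIcc_of_le hat htb))
  have hφ₂ : IntervalIntegrable φ volume t b :=
    hφ.mono_set (uIcc_subset_uIcc (mem_uIcc_of_le hat htb) right_mem_uIcc)
  have hφ₃ : IntervalIntegrable (fun x ↦ φ (x - 1)) volume (t + 1) (b + 1) := by
    simpa using hφ₂.comp_sub_right 1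
  have i₁ := hφ₁.congr (h₁.symm.mono Ioc_subset_Icc_self)
  have i₂ := (intervalIntegrable_const (μ := volume) (c := φ t) (a := t) (b := t + 1)).congr
    (h₂.symm.mono Ioc_subset_Icc_self)
  have i₃ := hφ₃.congr (h₃.symm.mono Ioc_subset_Icc_self)
  refine ⟨(i₁.trans i₂).trans i₃, ?_⟩
  rw [← intervalIntegral.integral_add_adjacent_intervals (i₁.trans i₂) i₃,
    ← intervalIntegral.integral_add_adjacent_intervals i₁ i₂, intervalIntegral.integral_congr h₁,
    intervalIntegral.integral_congr h₂, intervalIntegral.integral_congr h₃,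
    intervalIntegral.integral_comp_sub_right,
    ← intervalIntegral.integral_add_adjacent_intervals hφ₁ hφ₂]
  simp only [intervalIntegral.integral_const, add_sub_cancel_right, add_sub_cancel_left,
    one_smul]
  ring

lemma ConcaveOn.le_of_isMaxOn_of_mem_segment {𝕜 E β : Type*} [Field 𝕜] [LinearOrder 𝕜]
    [IsStrictOrderedRing 𝕜] [AddCommGroup E] [Module 𝕜 E] [AddCommGroup β] [LinearOrder β]
    [IsOrderedAddMonoid β] [Module 𝕜 β] [IsStrictOrderedModule 𝕜 β] {s : Set E} {φ : E → β}
    {t u z : E} (hφ : ConcaveOn 𝕜 s φ) (hmax : IsMaxOn φ s t) (ht : t ∈ s) (hu : u ∈ s)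
    (hz : z ∈ segment 𝕜 u t) : φ u ≤ φ z :=
  (le_min le_rfl (hmax hu)).trans (hφ.min_le_of_mem_segment hu ht hz)

lemma ConcaveOn.intervalIntegrable_of_isMaxOn {φ : ℝ → ℝ} {a b t : ℝ}
    (hφ : ConcaveOn ℝ (Icc a b) φ) (hmax : IsMaxOn φ (Icc a b) t) (ht : t ∈ Icc a b) :
    IntervalIntegrable φ volume a b := by
  have hmono : MonotoneOn φ (Icc a t) := fun u hu v hv huv ↦
    hφ.le_of_isMaxOn_of_mem_segment hmax ht ⟨hu.1, hu.2.trans ht.2⟩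
      (by rw [segment_eq_Icc (huv.trans hv.2)]; exact ⟨huv, hv.2⟩)
  have hanti : AntitoneOn φ (Icc t b) := fun u hu v hv huv ↦
    hφ.le_of_isMaxOn_of_mem_segment hmax ht ⟨ht.1.trans hv.1, hv.2⟩
      (by rw [segment_symm, segment_eq_Icc (hu.1.trans huv)]; exact ⟨hu.1, huv⟩)
  exact (uIcc_of_le ht.1 ▸ hmono).intervalIntegrable.trans
    (uIcc_of_le ht.2 ▸ hanti).intervalIntegrable

lemma volume_toReal_eq_integral_of_slices {A : Set (ℝ × ℝ)} (hA : MeasurableSet A) {l r : ℝ}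
    (hlr : l ≤ r) {G H : ℝ → ℝ}
    (hmem : ∀ x y, (x, y) ∈ A ↔ x ∈ Icc l r ∧ y ∈ Icc (G x) (H x))
    (hGH : ∀ x ∈ Icc l r, G x ≤ H x)
    (hint : IntervalIntegrable (fun x ↦ H x - G x) volume l r) :
    (volume A).toReal = ∫ x in l..r, (H x - G x) := by
  have hslice (x : ℝ) : volume (Prod.mk x ⁻¹' A) =
      (Icc l r).indicator (fun x ↦ ENNReal.ofReal (H x - G x)) x := by
    by_cases hx : x ∈ Icc l r
    · rw [indicator_of_mem hx, ← Real.volume_Icc]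
      congr 1
      ext y
      simp [hmem, hx]
    · rw [indicator_of_notMem hx, ← measure_empty (μ := (volume : Measure ℝ))]
      congr 1
      ext y
      simp [hmem, hx]
  have hpos : ∀ x ∈ Icc l r, 0 ≤ H x - G x := fun x hx ↦ sub_nonneg.2 (hGH x hx)
  rw [Measure.volume_eq_prod, Measure.prod_apply hA, lintegral_congr hslice,
    lintegral_indicator measurableSet_Icc, intervalIntegral.integral_of_le hlr,
    ← integral_Icc_eq_integral_Ioc, ← ofReal_integral_eq_lintegral_ofReal
      ((intervalIntegrable_iff_integrableOn_Icc_of_le hlr).1 hint)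
      ((ae_restrict_iff' measurableSet_Icc).2 (.of_forall hpos))]
  exact ENNReal.toReal_ofReal (setIntegral_nonneg measurableSet_Icc hpos)

noncomputable def sliceInf (K : Set (ℝ × ℝ)) (x : ℝ) : ℝ := sInf (Prod.mk x ⁻¹' K)

noncomputable def sliceSup (K : Set (ℝ × ℝ)) (x : ℝ) : ℝ := sSup (Prod.mk x ⁻¹' K)

section Slices

variable {K : Set (ℝ × ℝ)}

lemma Convex.preimage_prodMk (hK : Convex ℝ K) (x : ℝ) : Convex ℝ (Prod.mk x ⁻¹' K) :=
  fun _ hy₁ _ hy₂ _ _ hα hβ hαβ ↦ by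
    simpa [← add_mul, hαβ] using hK hy₁ hy₂ hα hβ hαβ

lemma IsCompact.preimage_prodMk (hK : IsCompact K) (x : ℝ) : IsCompact (Prod.mk x ⁻¹' K) :=
  (hK.image continuous_snd).of_isClosed_subset (hK.isClosed.preimage (.prodMk_right x))
    fun y hy ↦ ⟨(x, y), hy, rfl⟩

lemma preimage_prodMk_eq_Icc (hK : Convex ℝ K) (hKc : IsCompact K) {x : ℝ}
    (hx : x ∈ Prod.fst '' K) : Prod.mk x ⁻¹' K = Icc (sliceInf K x) (sliceSup K x) := by
  obtain ⟨p, hp, rfl⟩ := hx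
  exact eq_Icc_of_connected_compact ⟨⟨p.2, hp⟩, (hK.preimage_prodMk _).isPreconnected⟩
    (hKc.preimage_prodMk _)

lemma mem_iff_mem_Icc_sliceInf_sliceSup (hK : Convex ℝ K) (hKc : IsCompact K) {x y : ℝ} :
    (x, y) ∈ K ↔ x ∈ Prod.fst '' K ∧ y ∈ Icc (sliceInf K x) (sliceSup K x) := by
  refine ⟨fun h ↦ ⟨⟨_, h, rfl⟩, ?_⟩, fun ⟨hx, hy⟩ ↦ ?_⟩
  · rw [← preimage_prodMk_eq_Icc hK hKc ⟨_, h, rfl⟩]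
    exact h
  · rwa [← preimage_prodMk_eq_Icc hK hKc hx] at hy

lemma sliceInf_le_sliceSup (hK : Convex ℝ K) (hKc : IsCompact K) {x : ℝ}
    (hx : x ∈ Prod.fst '' K) : sliceInf K x ≤ sliceSup K x := by
  obtain ⟨p, hp, rfl⟩ := hx
  have hy := ((mem_iff_mem_Icc_sliceInf_sliceSup hK hKc).1 hp).2
  exact hy.1.trans hy.2

lemma prodMk_sliceSup_mem (hK : Convex ℝ K) (hKc : IsCompact K) {x : ℝ}
    (hx : x ∈ Prod.fst '' K) : (x, sliceSup K x) ∈ K :=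
  (mem_iff_mem_Icc_sliceInf_sliceSup hK hKc).2 ⟨hx, sliceInf_le_sliceSup hK hKc hx, le_rfl⟩

lemma prodMk_sliceInf_mem (hK : Convex ℝ K) (hKc : IsCompact K) {x : ℝ}
    (hx : x ∈ Prod.fst '' K) : (x, sliceInf K x) ∈ K :=
  (mem_iff_mem_Icc_sliceInf_sliceSup hK hKc).2 ⟨hx, le_rfl, sliceInf_le_sliceSup hK hKc hx⟩

lemma concaveOn_sliceSup (hK : Convex ℝ K) (hKc : IsCompact K) :
    ConcaveOn ℝ (Prod.fst '' K) (sliceSup K) :=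
  ⟨hK.linear_image (LinearMap.fst ℝ ℝ ℝ), fun _ hx₁ _ hx₂ _ _ hα hβ hαβ ↦
    ((mem_iff_mem_Icc_sliceInf_sliceSup hK hKc).1 (hK (prodMk_sliceSup_mem hK hKc hx₁)
      (prodMk_sliceSup_mem hK hKc hx₂) hα hβ hαβ)).2.2⟩

lemma convexOn_sliceInf (hK : Convex ℝ K) (hKc : IsCompact K) :
    ConvexOn ℝ (Prod.fst '' K) (sliceInf K) :=
  ⟨hK.linear_image (LinearMap.fst ℝ ℝ ℝ), fun _ hx₁ _ hx₂ _ _ hα hβ hαβ ↦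
    ((mem_iff_mem_Icc_sliceInf_sliceSup hK hKc).1 (hK (prodMk_sliceInf_mem hK hKc hx₁)
      (prodMk_sliceInf_mem hK hKc hx₂) hα hβ hαβ)).2.1⟩

end Slices

lemma convex_stdTriangle : Convex ℝ stdTriangle := convex_convexHull ℝ _

lemma isCompact_stdTriangle : IsCompact stdTriangle := (toFinite _).isCompact_convexHull ℝ

lemma mem_stdTriangle_iff {q : ℝ × ℝ} :
    q ∈ stdTriangle ↔ 0 ≤ q.1 ∧ 0 ≤ q.2 ∧ q.1 + q.2 ≤ 1 := by
  constructor
  · intro hq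
    refine convexHull_min (t := {q : ℝ × ℝ | 0 ≤ q.1 ∧ 0 ≤ q.2 ∧ q.1 + q.2 ≤ 1}) ?_ ?_ hq
    · rintro _ (rfl | rfl | rfl) <;> simp
    · rintro x ⟨hx₁, hx₂, hx₃⟩ y ⟨hy₁, hy₂, hy₃⟩ α β hα hβ hαβ
      simp only [mem_ofPred_eq, Prod.fst_add, Prod.snd_add, Prod.smul_fst, Prod.smul_snd,
        smul_eq_mul]
      exact ⟨by positivity, by positivity, by nlinarith⟩
  · rintro ⟨h₁, h₂, h₃⟩
    have hq : q = ∑ i, ![1 - q.1 - q.2, q.1, q.2] i • ![((0 : ℝ), (0 : ℝ)), (1, 0), (0, 1)] i := by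
      ext <;> simp [Fin.sum_univ_three]
    rw [hq]
    refine convex_stdTriangle.sum_mem (fun i _ ↦ ?_) ?_ (fun i _ ↦ subset_convexHull ℝ _ ?_)
    · fin_cases i <;>
        simp only [Fin.zero_eta, Fin.mk_one, Fin.reduceFinMk, Fin.isValue, Matrix.cons_val_zero,
          Matrix.cons_val_one, Matrix.cons_val] <;> linarith
    · simp only [Fin.sum_univ_three, Matrix.cons_val_zero, Matrix.cons_val_one, Matrix.cons_val]
      ring
    · fin_cases i <;> simp

lemma mem_smul_stdTriangle_iff {r : ℝ} (hr : 0 ≤ r) {q : ℝ × ℝ} :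
    q ∈ r • stdTriangle ↔ 0 ≤ q.1 ∧ 0 ≤ q.2 ∧ q.1 + q.2 ≤ r := by
  rcases hr.eq_or_lt with rfl | hr
  · rw [zero_smul_set ⟨0, mem_stdTriangle_iff.2 (by simp)⟩, Set.mem_zero, Prod.ext_iff,
      Prod.fst_zero, Prod.snd_zero]
    constructor
    · rintro ⟨h₁, h₂⟩
      simp [h₁, h₂]
    · rintro ⟨h₁, h₂, h₃⟩
      exact ⟨by linarith, by linarith⟩
  · rw [mem_smul_set_iff_inv_smul_mem₀ hr.ne', mem_stdTriangle_iff]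
    simp only [Prod.smul_fst, Prod.smul_snd, smul_eq_mul, ← mul_add]
    rw [mul_nonneg_iff_of_pos_left (inv_pos.2 hr), mul_nonneg_iff_of_pos_left (inv_pos.2 hr),
      inv_mul_le_one₀ hr]

lemma image_fst_eq_Icc {K : Set (ℝ × ℝ)} (hK : Convex ℝ K) (hKc : IsCompact K) {a a' : ℝ}
    (ha : IsLeast (Prod.fst '' K) a) (ha' : IsGreatest (Prod.fst '' K) a') :
    Prod.fst '' K = Icc a a' := by
  rw [eq_Icc_of_connected_compact
    ⟨ha.nonempty, (hK.linear_image (LinearMap.fst ℝ ℝ ℝ)).isPreconnected⟩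
    (hKc.image continuous_fst), ha.csInf_eq, ha'.csSup_eq]

lemma exists_isMaxOn_sliceSup_add_id {K : Set (ℝ × ℝ)} (hK : Convex ℝ K) (hKc : IsCompact K)
    {c : ℝ} (hc : IsGreatest ((fun p ↦ p.1 + p.2) '' K) c) :
    ∃ t ∈ Prod.fst '' K, IsMaxOn (fun x ↦ sliceSup K x + x) (Prod.fst '' K) t ∧
      sliceSup K t + t = c := by
  obtain ⟨p, hp, rfl⟩ := hc.1
  have hle (x : ℝ) (hx : x ∈ Prod.fst '' K) : sliceSup K x + x ≤ p.1 + p.2 := by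
    have := hc.2 ⟨_, prodMk_sliceSup_mem hK hKc hx, rfl⟩
    dsimp only at this
    linarith
  have hp₂ := ((mem_iff_mem_Icc_sliceInf_sliceSup hK hKc).1 hp).2.2
  have heq : sliceSup K p.1 + p.1 = p.1 + p.2 := (hle p.1 ⟨p, hp, rfl⟩).antisymm (by linarith)
  exact ⟨p.1, ⟨p, hp, rfl⟩, fun x hx ↦ (hle x hx).trans heq.ge, heq⟩

lemma exists_isMinOn_sliceInf {K : Set (ℝ × ℝ)} (hK : Convex ℝ K) (hKc : IsCompact K)
    {b : ℝ} (hb : IsLeast (Prod.snd '' K) b) :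
    ∃ u ∈ Prod.fst '' K, IsMinOn (sliceInf K) (Prod.fst '' K) u ∧ sliceInf K u = b := by
  obtain ⟨p, hp, rfl⟩ := hb.1
  have hge (x : ℝ) (hx : x ∈ Prod.fst '' K) : p.2 ≤ sliceInf K x :=
    hb.2 ⟨_, prodMk_sliceInf_mem hK hKc hx, rfl⟩
  have heq : sliceInf K p.1 = p.2 :=
    ((mem_iff_mem_Icc_sliceInf_sliceSup hK hKc).1 hp).2.1.antisymm (hge p.1 ⟨p, hp, rfl⟩)
  exact ⟨p.1, ⟨p, hp, rfl⟩, fun x hx ↦ heq ▸ hge x hx, heq⟩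

lemma prodMk_mem_add_stdTriangle_of_nearestInWindow {K : Set (ℝ × ℝ)} (hK : Convex ℝ K)
    (hKc : IsCompact K) {a a' t u x : ℝ} (hfst : Prod.fst '' K = Icc a a') (ht : t ∈ Icc a a')
    (hu : u ∈ Icc a a') (hx : x ∈ Icc a (a' + 1)) :
    (x, sliceInf K (nearestInWindow u x)) ∈ K + stdTriangle ∧
      (x, sliceSup K (nearestInWindow t x) + nearestInWindow t x + 1 - x) ∈ K + stdTriangle := by
  have hρ {s : ℝ} (hs : s ∈ Icc a a') : nearestInWindow s x ∈ Prod.fst '' K :=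
    hfst ▸ nearestInWindow_mem_Icc hs hx
  obtain ⟨hu₁, hu₂⟩ := nearestInWindow_mem_Icc_sub_one u x
  obtain ⟨ht₁, ht₂⟩ := nearestInWindow_mem_Icc_sub_one t x
  constructor
  · refine mem_add.2 ⟨_, prodMk_sliceInf_mem hK hKc (hρ hu), (x - nearestInWindow u x, 0),
      mem_stdTriangle_iff.2 ⟨by dsimp only; linarith, le_rfl, by dsimp only; linarith⟩, ?_⟩
    ext <;> simp
  · refine mem_add.2 ⟨_, prodMk_sliceSup_mem hK hKc (hρ ht),
      (x - nearestInWindow t x, 1 - (x - nearestInWindow t x)), mem_stdTriangle_iff.2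
        ⟨by dsimp only; linarith, by dsimp only; linarith, by dsimp only; linarith⟩, ?_⟩
    ext <;> simp only [Prod.fst_add, Prod.snd_add] <;> ring

lemma mem_add_stdTriangle_iff {K : Set (ℝ × ℝ)} (hK : Convex ℝ K) (hKc : IsCompact K)
    {a a' t u : ℝ} (hfst : Prod.fst '' K = Icc a a')
    (ht : t ∈ Icc a a') (htmax : IsMaxOn (fun x ↦ sliceSup K x + x) (Icc a a') t)
    (hu : u ∈ Icc a a') (humin : IsMinOn (sliceInf K) (Icc a a') u) {x y : ℝ} :
    (x, y) ∈ K + stdTriangle ↔ x ∈ Icc a (a' + 1) ∧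
      y ∈ Icc (sliceInf K (nearestInWindow u x))
        (sliceSup K (nearestInWindow t x) + nearestInWindow t x + 1 - x) := by
  refine ⟨?_, fun ⟨hx, hy⟩ ↦ ?_⟩
  · rintro ⟨p, hp, q, hq, hpq⟩
    obtain ⟨hq₁, hq₂, hq₃⟩ := mem_stdTriangle_iff.1 hq
    obtain ⟨hp₁, hp₂⟩ := (mem_iff_mem_Icc_sliceInf_sliceSup hK hKc).1 hp
    rw [hfst] at hp₁
    simp only [Prod.ext_iff, Prod.fst_add, Prod.snd_add] at hpq
    obtain ⟨rfl, rfl⟩ := hpq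
    have hwin (s : ℝ) : nearestInWindow s (p.1 + q.1) ∈ segment ℝ p.1 s := by
      rw [segment_eq_uIcc]
      exact nearestInWindow_mem_uIcc (by linarith) (by linarith)
    have hsup := ((hfst ▸ concaveOn_sliceSup hK hKc).add (concaveOn_id (convex_Icc a a'))
      ).le_of_isMaxOn_of_mem_segment htmax ht hp₁ (hwin t)
    have hinf := (hfst ▸ convexOn_sliceInf hK hKc).neg.le_of_isMaxOn_of_mem_segment humin.neg
      hu hp₁ (hwin u)
    simp only [Pi.add_apply, id, Pi.neg_apply] at hsup hinf
    refine ⟨⟨by linarith [hp₁.1], by linarith [hp₁.2]⟩, ?_, ?_⟩ <;> linarith [hp₂.1, hp₂.2]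
  · obtain ⟨hbot, htop⟩ := prodMk_mem_add_stdTriangle_of_nearestInWindow hK hKc hfst ht hu hx
    exact ((hK.add convex_stdTriangle).preimage_prodMk x).ordConnected.out hbot htop hy

lemma volume_add_stdTriangle_of_isMaxOn_of_isMinOn {K : Set (ℝ × ℝ)} (hK : Convex ℝ K)
    (hKc : IsCompact K) {a a' t u : ℝ} (haa' : a ≤ a') (hfst : Prod.fst '' K = Icc a a')
    (ht : t ∈ Icc a a') (htmax : IsMaxOn (fun x ↦ sliceSup K x + x) (Icc a a') t)
    (hu : u ∈ Icc a a') (humin : IsMinOn (sliceInf K) (Icc a a') u) :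
    (volume (K + stdTriangle)).toReal =
      (volume K).toReal + 1 / 2 + (sliceSup K t + t - a - sliceInf K u) := by
  have iψ : IntervalIntegrable (fun x ↦ sliceSup K x + x) volume a a' :=
    ((hfst ▸ concaveOn_sliceSup hK hKc).add (concaveOn_id (convex_Icc a a'))
      ).intervalIntegrable_of_isMaxOn htmax ht
  have iχ : IntervalIntegrable (fun x ↦ -sliceInf K x) volume a a' :=
    (hfst ▸ convexOn_sliceInf hK hKc).neg.intervalIntegrable_of_isMaxOn humin.neg hu
  obtain ⟨iψ', eψ⟩ := intervalIntegrable_and_integral_comp_nearestInWindow ht.1 ht.2 iψ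
  obtain ⟨iχ', eχ⟩ := intervalIntegrable_and_integral_comp_nearestInWindow hu.1 hu.2 iχ
  have iid (l r : ℝ) : IntervalIntegrable (fun x : ℝ ↦ x) volume l r :=
    intervalIntegral.intervalIntegrable_id
  have i₁ (l r : ℝ) : IntervalIntegrable (fun x : ℝ ↦ 1 - x) volume l r :=
    intervalIntegrable_const.sub (iid l r)
  have hK_eq : (fun x ↦ sliceSup K x - sliceInf K x) =
      fun x ↦ (sliceSup K x + x) + -sliceInf K x - x := by
    funext x; ring
  have hA_eq : (fun x ↦ sliceSup K (nearestInWindow t x) + nearestInWindow t x + 1 - x -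
      sliceInf K (nearestInWindow u x)) = fun x ↦ (sliceSup K (nearestInWindow t x) +
        nearestInWindow t x) + -sliceInf K (nearestInWindow u x) + (1 - x) := by
    funext x; ring
  have hmemA (x y : ℝ) := mem_add_stdTriangle_iff hK hKc hfst ht htmax hu humin (x := x) (y := y)
  rw [volume_toReal_eq_integral_of_slices hKc.measurableSet haa'
      (fun x y ↦ hfst ▸ mem_iff_mem_Icc_sliceInf_sliceSup hK hKc)
      (fun x hx ↦ sliceInf_le_sliceSup hK hKc (hfst ▸ hx))
      (hK_eq ▸ (iψ.add iχ).sub (iid a a')),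
    volume_toReal_eq_integral_of_slices (hKc.add isCompact_stdTriangle).measurableSet
      (by linarith : a ≤ a' + 1) hmemA
      (fun x hx ↦ ((hmemA _ _).1
        (prodMk_mem_add_stdTriangle_of_nearestInWindow hK hKc hfst ht hu hx).1).2.2)
      (hA_eq ▸ (iψ'.add iχ').add (i₁ a (a' + 1))),
    hA_eq, hK_eq, intervalIntegral.integral_sub (iψ.add iχ) (iid a a'),
    intervalIntegral.integral_add (iψ'.add iχ') (i₁ a (a' + 1)),
    intervalIntegral.integral_add iψ' iχ', intervalIntegral.integral_add iψ iχ, eψ, eχ,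
    intervalIntegral.integral_sub intervalIntegrable_const (iid a (a' + 1)), integral_one,
    integral_id, integral_id]
  ring

theorem volume_add_stdTriangle {K : Set (ℝ × ℝ)} (hK : Convex ℝ K) (hKc : IsCompact K)
    {a b c : ℝ} (ha : IsLeast (Prod.fst '' K) a) (hb : IsLeast (Prod.snd '' K) b)
    (hc : IsGreatest ((fun p ↦ p.1 + p.2) '' K) c) :
    (volume (K + stdTriangle)).toReal = (volume K).toReal + 1 / 2 + (c - a - b) := by
  obtain ⟨a', ha'⟩ := (hKc.image continuous_fst).exists_isGreatest ha.nonempty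
  have hfst := image_fst_eq_Icc hK hKc ha ha'
  obtain ⟨t, ht, htmax, rfl⟩ := exists_isMaxOn_sliceSup_add_id hK hKc hc
  obtain ⟨u, hu, humin, rfl⟩ := exists_isMinOn_sliceInf hK hKc hb
  rw [hfst] at ht htmax hu humin
  exact volume_add_stdTriangle_of_isMaxOn_of_isMinOn hK hKc (ha'.2 ha.1) hfst ht htmax hu humin

lemma volume_stdTriangle_toReal : (volume stdTriangle).toReal = 1 / 2 := by
  simpa using volume_add_stdTriangle (convex_singleton 0) isCompact_singleton
    (a := 0) (b := 0) (c := 0) (by simp) (by simp) (by simp)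

lemma mixedArea_stdTriangle_eq {K : Set (ℝ × ℝ)} (hK : Convex ℝ K) (hKc : IsCompact K)
    {a b c : ℝ} (ha : IsLeast (Prod.fst '' K) a) (hb : IsLeast (Prod.snd '' K) b)
    (hc : IsGreatest ((fun p ↦ p.1 + p.2) '' K) c) : mixedArea K stdTriangle = c - a - b := by
  rw [mixedArea, volume_add_stdTriangle hK hKc ha hb hc, volume_stdTriangle_toReal]
  ring

lemma image_add_subset_smul_stdTriangle_iff {K : Set (ℝ × ℝ)} {a b c : ℝ}
    (ha : IsLeast (Prod.fst '' K) a) (hb : IsLeast (Prod.snd '' K) b)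
    (hc : IsGreatest ((fun p ↦ p.1 + p.2) '' K) c) (v : ℝ × ℝ) {r : ℝ} (hr : 0 ≤ r) :
    (· + v) '' K ⊆ r • stdTriangle ↔ 0 ≤ a + v.1 ∧ 0 ≤ b + v.2 ∧ c + v.1 + v.2 ≤ r := by
  rw [image_subset_iff]
  simp only [subset_def, mem_preimage, mem_smul_stdTriangle_iff hr, Prod.fst_add, Prod.snd_add]
  constructor
  · intro h
    obtain ⟨pa, hpa, rfl⟩ := ha.1
    obtain ⟨pb, hpb, rfl⟩ := hb.1
    obtain ⟨pc, hpc, rfl⟩ := hc.1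
    exact ⟨(h pa hpa).1, (h pb hpb).2.1, by linarith [(h pc hpc).2.2]⟩
  · rintro ⟨h₁, h₂, h₃⟩ p hp
    have hpa : a ≤ p.1 := ha.2 ⟨p, hp, rfl⟩
    have hpb : b ≤ p.2 := hb.2 ⟨p, hp, rfl⟩
    have hpc : p.1 + p.2 ≤ c := hc.2 ⟨p, hp, rfl⟩
    exact ⟨by linarith, by linarith, by linarith⟩

lemma add_le_of_isLeast_of_isGreatest {K : Set (ℝ × ℝ)} {a b c : ℝ}
    (ha : IsLeast (Prod.fst '' K) a) (hb : IsLeast (Prod.snd '' K) b)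
    (hc : IsGreatest ((fun p ↦ p.1 + p.2) '' K) c) : a + b ≤ c := by
  obtain ⟨p, hp, rfl⟩ := ha.1
  have hb' : b ≤ p.2 := hb.2 ⟨p, hp, rfl⟩
  have hc' : p.1 + p.2 ≤ c := hc.2 ⟨p, hp, rfl⟩
  linarith

lemma exists_translate_subset_smul_stdTriangle_iff {K : Set (ℝ × ℝ)} {a b c : ℤ}
    (ha : IsLeast (Prod.fst '' K) (a : ℝ)) (hb : IsLeast (Prod.snd '' K) (b : ℝ))
    (hc : IsGreatest ((fun p ↦ p.1 + p.2) '' K) (c : ℝ)) (δ : ℕ) :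
    (∃ t : ℤ × ℤ, (fun x : ℝ × ℝ => x + latticeEmbed t) '' K ⊆ (δ : ℝ) • stdTriangle) ↔
      c - a - b ≤ δ := by
  simp_rw [image_add_subset_smul_stdTriangle_iff ha hb hc _ (Nat.cast_nonneg δ), latticeEmbed]
  constructor
  · rintro ⟨t, h₁, h₂, h₃⟩
    have : 0 ≤ a + t.1 ∧ 0 ≤ b + t.2 ∧ c + t.1 + t.2 ≤ δ :=
      ⟨by exact_mod_cast h₁, by exact_mod_cast h₂, by exact_mod_cast h₃⟩
    omega
  · intro h
    refine ⟨(-a, -b), by simp, by simp, ?_⟩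
    have : c + -a + -b ≤ (δ : ℤ) := by omega
    exact_mod_cast this

lemma exists_isLeast_image_convexHull {ι E : Type*} [AddCommGroup E] [Module ℝ E]
    {S : Finset ι} (hS : S.Nonempty) (v : ι → E) {f : E → ℝ} (hf : IsLinearMap ℝ f) :
    ∃ i ∈ S, IsLeast (f '' convexHull ℝ (v '' S)) (f (v i)) := by
  obtain ⟨i, hi, hmin⟩ := S.exists_min_image (f ∘ v) hS
  refine ⟨i, hi, image_mono (subset_convexHull ℝ _) ⟨v i, ⟨i, hi, rfl⟩, rfl⟩, ?_⟩
  rintro _ ⟨p, hp, rfl⟩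
  refine convexHull_min ?_ (convex_halfSpace_ge hf (f (v i))) hp
  rintro _ ⟨j, hj, rfl⟩
  exact hmin j hj

lemma exists_isGreatest_image_convexHull {ι E : Type*} [AddCommGroup E] [Module ℝ E]
    {S : Finset ι} (hS : S.Nonempty) (v : ι → E) {f : E → ℝ} (hf : IsLinearMap ℝ f) :
    ∃ i ∈ S, IsGreatest (f '' convexHull ℝ (v '' S)) (f (v i)) := by
  obtain ⟨i, hi, hmax⟩ := S.exists_max_image (f ∘ v) hS
  refine ⟨i, hi, image_mono (subset_convexHull ℝ _) ⟨v i, ⟨i, hi, rfl⟩, rfl⟩, ?_⟩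
  rintro _ ⟨p, hp, rfl⟩
  refine convexHull_min ?_ (convex_halfSpace_le hf (f (v i))) hp
  rintro _ ⟨j, hj, rfl⟩
  exact hmax j hj

namespace IsLatticePolytope

variable {P : Set (ℝ × ℝ)}

lemma convex (hP : IsLatticePolytope P) : Convex ℝ P := by
  obtain ⟨S, -, rfl⟩ := hP
  exact convex_convexHull ℝ _

lemma isCompact (hP : IsLatticePolytope P) : IsCompact P := by
  obtain ⟨S, -, rfl⟩ := hP
  exact (S.finite_toSet.image _).isCompact_convexHull ℝ

lemma exists_int_isLeast_isGreatest (hP : IsLatticePolytope P) :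
    ∃ a b c : ℤ, IsLeast (Prod.fst '' P) (a : ℝ) ∧ IsLeast (Prod.snd '' P) (b : ℝ) ∧
      IsGreatest ((fun p ↦ p.1 + p.2) '' P) (c : ℝ) := by
  obtain ⟨S, hS, rfl⟩ := hP
  obtain ⟨sa, -, ha⟩ := exists_isLeast_image_convexHull hS latticeEmbed (f := Prod.fst)
    (LinearMap.fst ℝ ℝ ℝ).isLinear
  obtain ⟨sb, -, hb⟩ := exists_isLeast_image_convexHull hS latticeEmbed (f := Prod.snd)
    (LinearMap.snd ℝ ℝ ℝ).isLinear
  obtain ⟨sc, -, hc⟩ := exists_isGreatest_image_convexHull hS latticeEmbed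
    (f := fun p ↦ p.1 + p.2) (LinearMap.fst ℝ ℝ ℝ + LinearMap.snd ℝ ℝ ℝ).isLinear
  exact ⟨sa.1, sb.2, sc.1 + sc.2, ha, hb, by simpa [latticeEmbed] using hc⟩

end IsLatticePolytope

/-- For a lattice polytope `P`, the mixed area `V(P,Δ₂)` is the smallest non-negative integer
`δ` such that some lattice translate of `P` is contained in the dilate `δ·Δ₂`. -/
theorem mixedArea_stdTriangle (P : Set (ℝ × ℝ)) (hP : IsLatticePolytope P) :
    ∃ n : ℕ, mixedArea P stdTriangle = (n : ℝ) ∧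
      IsLeast {δ : ℕ | ∃ t : ℤ × ℤ,
        (fun x : ℝ × ℝ => x + latticeEmbed t) '' P ⊆ (δ : ℝ) • stdTriangle} n := by
  obtain ⟨a, b, c, ha, hb, hc⟩ := hP.exists_int_isLeast_isGreatest
  have habc : a + b ≤ c := by exact_mod_cast add_le_of_isLeast_of_isGreatest ha hb hc
  refine ⟨(c - a - b).toNat, ?_, (exists_translate_subset_smul_stdTriangle_iff ha hb hc _).2
    (Int.self_le_toNat _), fun δ h ↦ ?_⟩
  · rw [mixedArea_stdTriangle_eq hP.convex hP.isCompact ha hb hc]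
    have : ((c - a - b).toNat : ℤ) = c - a - b := Int.toNat_of_nonneg (by omega)
    exact_mod_cast this.symm
  · have := (exists_translate_subset_smul_stdTriangle_iff ha hb hc δ).1 h
    omega
end

section
/- Let (v₁₂, v₁₃, v₂₃) ∈ ℤ≥0³ be any triple of non-negative integers. Then there exist lattice polytopes P₁, P₂, P₃ in ℝ² such that V(P₁,P₂) = v₁₂, V(P₁,P₃) = v₁₃, and V(P₂,P₃) = v₂₃. -/
/-!
Take the three polytopes to be lattice segments `[0, uᵢ]`. Two segments from the origin have
zero area and sum to the parallelogram spanned by `uᵢ, uⱼ`, so `V([0, uᵢ], [0, uⱼ]) = |det(uᵢ, uⱼ)|`.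
It remains to find `u₁, u₂, u₃ ∈ ℤ²` with prescribed pairwise determinants `a, b, c`. With
`d = gcd(a, b)` and a Bézout relation `A·(a/d) + B·(b/d) = 1`, the vectors
`u₁ = (d, 0)`, `u₂ = (cB, a/d)`, `u₃ = (-cA, b/d)` do it.
-/

open MeasureTheory Pointwise

open Set in
theorem segment_zero_add_segment_zero (u v : ℝ × ℝ) :
    segment ℝ 0 u + segment ℝ 0 v =
      Matrix.toLin (Module.Basis.finTwoProd ℝ) (Module.Basis.finTwoProd ℝ) !![u.1, v.1; u.2, v.2] ''
        Icc 0 1 ×ˢ Icc 0 1 := by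
  ext z
  simp only [segment_eq_image, mem_add, mem_image, mem_prod, Matrix.toLin_finTwoProd_apply]
  constructor
  · rintro ⟨_, ⟨s, hs, rfl⟩, _, ⟨t, ht, rfl⟩, rfl⟩
    exact ⟨(s, t), ⟨hs, ht⟩, by ext <;> simp <;> ring⟩
  · rintro ⟨⟨s, t⟩, ⟨hs, ht⟩, rfl⟩
    exact ⟨_, ⟨s, hs, rfl⟩, _, ⟨t, ht, rfl⟩, by ext <;> simp <;> ring⟩

theorem volume_segment_zero_add_segment_zero (u v : ℝ × ℝ) :
    volume (segment ℝ 0 u + segment ℝ 0 v) = ENNReal.ofReal |u.1 * v.2 - v.1 * u.2| := by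
  rw [segment_zero_add_segment_zero, Measure.addHaar_image_linearMap, LinearMap.det_toLin,
    Matrix.det_fin_two_of, Measure.volume_eq_prod, Measure.prod_prod, Real.volume_Icc]
  simp

theorem volume_segment_zero (u : ℝ × ℝ) : volume (segment ℝ 0 u) = 0 := by
  simpa using volume_segment_zero_add_segment_zero u 0

theorem mixedArea_segment_zero (u v : ℝ × ℝ) :
    mixedArea (segment ℝ 0 u) (segment ℝ 0 v) = |u.1 * v.2 - v.1 * u.2| := by
  simp [mixedArea, volume_segment_zero_add_segment_zero, volume_segment_zero]

theorem isLatticePolytope_segment_zero (u : ℤ × ℤ) :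
    IsLatticePolytope (segment ℝ 0 (latticeEmbed u)) := by
  refine ⟨{0, u}, Finset.insert_nonempty _ _, ?_⟩
  rw [Finset.coe_pair, Set.image_pair, convexHull_pair]
  simp [latticeEmbed, Prod.mk_zero_zero]

def cross (u v : ℤ × ℤ) : ℤ := u.1 * v.2 - v.1 * u.2

theorem mixedArea_segment_latticeEmbed (u v : ℤ × ℤ) :
    mixedArea (segment ℝ 0 (latticeEmbed u)) (segment ℝ 0 (latticeEmbed v)) =
      |(cross u v : ℝ)| := by
  simp [mixedArea_segment_zero, cross, latticeEmbed]

theorem exists_cross_eq (a b c : ℕ) :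
    ∃ u₁ u₂ u₃ : ℤ × ℤ, cross u₁ u₂ = a ∧ cross u₁ u₃ = b ∧ cross u₂ u₃ = c := by
  rcases Nat.eq_zero_or_pos (a.gcd b) with hd | hd
  · obtain ⟨rfl, rfl⟩ := Nat.gcd_eq_zero_iff.mp hd
    exact ⟨0, (1, 0), (0, c), by simp [cross]⟩
  set d := a.gcd b
  obtain ⟨A, B, hAB⟩ := Nat.isCoprime_iff_coprime.mpr (Nat.coprime_div_gcd_div_gcd hd)
  refine ⟨(d, 0), (c * B, (a / d : ℕ)), (-(c * A), (b / d : ℕ)), ?_, ?_, ?_⟩ <;> simp only [cross]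
  · rw [mul_zero, sub_zero, ← Nat.cast_mul, Nat.mul_div_cancel' (Nat.gcd_dvd_left a b)]
  · rw [mul_zero, sub_zero, ← Nat.cast_mul, Nat.mul_div_cancel' (Nat.gcd_dvd_right a b)]
  · linear_combination (c : ℤ) * hAB

/-- Any triple of non-negative integers arises as the triple of pairwise mixed areas of
three lattice polytopes in ℝ². -/
theorem realizable_three (v₁₂ v₁₃ v₂₃ : ℕ) :
    ∃ P₁ P₂ P₃ : Set (ℝ × ℝ),
      IsLatticePolytope P₁ ∧ IsLatticePolytope P₂ ∧ IsLatticePolytope P₃ ∧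
      mixedArea P₁ P₂ = (v₁₂ : ℝ) ∧ mixedArea P₁ P₃ = (v₁₃ : ℝ) ∧
      mixedArea P₂ P₃ = (v₂₃ : ℝ) := by
  obtain ⟨u₁, u₂, u₃, h₁₂, h₁₃, h₂₃⟩ := exists_cross_eq v₁₂ v₁₃ v₂₃
  refine ⟨_, _, _, isLatticePolytope_segment_zero u₁, isLatticePolytope_segment_zero u₂,
    isLatticePolytope_segment_zero u₃, ?_, ?_, ?_⟩ <;>
  simp [mixedArea_segment_latticeEmbed, h₁₂, h₁₃, h₂₃]
end

section
/- Let v = (v₁₂, v₁₃, v₁₄, v₂₃, v₂₄, v₃₄) ∈ ℤ≥0⁶ satisfy the Plücker-type inequalities, and suppose that at least one of the three inequalities holds with equality (i.e., v is a boundary point of the discrete Plücker set). Then there exist four lattice segments P₁, P₂, P₃, P₄ in ℝ² (each the convex hull of at most two points of ℤ², possibly degenerate to a point) such that V(Pᵢ,Pⱼ) = v_{ij} for all 1 ≤ i < j ≤ 4. -/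
open MeasureTheory Pointwise

/-- A lattice segment: the convex hull of (at most) two lattice points, possibly
degenerate to a point. -/
def IsLatticeSegment (P : Set (ℝ × ℝ)) : Prop :=
  ∃ p q : ℤ × ℤ, P = convexHull ℝ {latticeEmbed p, latticeEmbed q}

/-!
Segments from the origin to lattice points `a, b` have mixed area `|det (a, b)|`: a segment is
null, and the Minkowski sum of two of them is the parallelogram they span. So it suffices to
choose signs making the tight Plücker inequality the Plücker relation
`p₁₂ p₃₄ - p₁₃ p₂₄ + p₁₄ p₂₃ = 0`, and to realize every integer solution of that relation as the
`2 × 2` minors of four vectors of `ℤ²`. For the latter write `(p₁₂, p₁₃, p₁₄) = g • c` with `c`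
primitive, say `x ⬝ c = 1`; the relation says that `c` is orthogonal to `w = (p₃₄, -p₂₄, p₂₃)`.
Take `u₁ = (g, 0)` and `c` as the second coordinates of `u₂, u₃, u₄`: the first coordinates `a`
must solve `a × c = w`, and `a = x × w` does, since `(x × w) × c = (x ⬝ c) w - (w ⬝ c) x`.
-/

open Matrix

theorem exists_eq_smul_dotProduct_eq_one {R ι : Type*} [CommRing R] [IsDomain R]
    [IsPrincipalIdealRing R] [Fintype ι] {v : ι → R} (hv : v ≠ 0) :
    ∃ g : R, g ≠ 0 ∧ ∃ c x : ι → R, v = g • c ∧ x ⬝ᵥ c = 1 := by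
  set I := Ideal.span (Set.range v)
  set g := Submodule.IsPrincipal.generator I
  have hI : Ideal.span {g} = I := Ideal.span_singleton_generator I
  have hg : g ≠ 0 := by
    rintro hg
    rw [hg, Ideal.span_singleton_eq_bot.mpr rfl, eq_comm, Ideal.span_eq_bot] at hI
    exact hv (funext fun i => hI _ ⟨i, rfl⟩)
  have hdvd (i : ι) : g ∣ v i := Ideal.mem_span_singleton.mp (hI ▸ Ideal.subset_span ⟨i, rfl⟩)
  choose c hc using hdvd
  obtain ⟨x, hx⟩ := Ideal.mem_span_range_iff_exists_fun.mp (hI ▸ Ideal.mem_span_singleton_self g)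
  refine ⟨g, hg, c, x, funext hc, mul_left_cancel₀ hg ?_⟩
  calc g * (x ⬝ᵥ c) = ∑ i, x i * v i := by
        simp only [hc, dotProduct, Finset.mul_sum]
        exact Finset.sum_congr rfl fun i _ => by ring
    _ = g * 1 := by rw [hx, mul_one]

theorem exists_primitive_orthogonal {R ι : Type*} [CommRing R] [IsDomain R]
    [IsPrincipalIdealRing R] [Fintype ι] {v w : ι → R} (hv : v ≠ 0) (hvw : v ⬝ᵥ w = 0) :
    ∃ g : R, ∃ c x : ι → R, v = g • c ∧ x ⬝ᵥ c = 1 ∧ c ⬝ᵥ w = 0 := by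
  obtain ⟨g, hg, c, x, rfl, hx⟩ := exists_eq_smul_dotProduct_eq_one hv
  rw [smul_dotProduct, smul_eq_zero, or_iff_right hg] at hvw
  exact ⟨g, c, x, rfl, hx, hvw⟩

def det2 {R : Type*} [CommRing R] (a b : R × R) : R := a.1 * b.2 - a.2 * b.1

def IsMinorSextuple (p₁₂ p₁₃ p₁₄ p₂₃ p₂₄ p₃₄ : ℤ) : Prop :=
  ∃ u₁ u₂ u₃ u₄ : ℤ × ℤ, det2 u₁ u₂ = p₁₂ ∧ det2 u₁ u₃ = p₁₃ ∧ det2 u₁ u₄ = p₁₄ ∧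
    det2 u₂ u₃ = p₂₃ ∧ det2 u₂ u₄ = p₂₄ ∧ det2 u₃ u₄ = p₃₄

theorem isMinorSextuple_of_dotProduct_eq_one (g p₂₃ p₂₄ p₃₄ : ℤ) {c x : Fin 3 → ℤ}
    (hx : x ⬝ᵥ c = 1) (hc : c ⬝ᵥ ![p₃₄, -p₂₄, p₂₃] = 0) :
    IsMinorSextuple (g * c 0) (g * c 1) (g * c 2) p₂₃ p₂₄ p₃₄ := by
  set a := x ⨯₃ ![p₃₄, -p₂₄, p₂₃]
  have ha : a ⨯₃ c = ![p₃₄, -p₂₄, p₂₃] := by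
    rw [cross_cross_eq_smul_sub_smul, hx, dotProduct_comm, hc, one_smul, zero_smul, sub_zero]
  obtain ⟨h₃₄, h₂₄, h₂₃, -⟩ := by simpa only [cross_apply, vecCons_inj] using ha
  refine ⟨(g, 0), (a 0, c 0), (a 1, c 1), (a 2, c 2), ?_, ?_, ?_, ?_, ?_, ?_⟩ <;>
    simp only [det2] <;> linarith

theorem isMinorSextuple_of_plucker {p₁₂ p₁₃ p₁₄ p₂₃ p₂₄ p₃₄ : ℤ}
    (h : p₁₂ * p₃₄ - p₁₃ * p₂₄ + p₁₄ * p₂₃ = 0) :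
    IsMinorSextuple p₁₂ p₁₃ p₁₄ p₂₃ p₂₄ p₃₄ := by
  set w : Fin 3 → ℤ := ![p₃₄, -p₂₄, p₂₃]
  by_cases hrow : ![p₁₂, p₁₃, p₁₄] = 0
  · obtain ⟨rfl, rfl, rfl⟩ : p₁₂ = 0 ∧ p₁₃ = 0 ∧ p₁₄ = 0 := by simpa using hrow
    -- Here `g = 0`, and any primitive `c` orthogonal to `w` will do.
    obtain ⟨q, hq, hqw⟩ : ∃ q : Fin 3 → ℤ, q ≠ 0 ∧ q ⬝ᵥ w = 0 := by
      by_cases h' : p₂₄ = 0 ∧ p₃₄ = 0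
      · exact ⟨![1, 0, 0], by simp, by simp [w, h'.2]⟩
      · exact ⟨![p₂₄, p₃₄, 0], by simpa using h', by simp [w, mul_comm]⟩
    obtain ⟨-, c, x, -, hx, hc⟩ := exists_primitive_orthogonal hq hqw
    simpa using isMinorSextuple_of_dotProduct_eq_one 0 p₂₃ p₂₄ p₃₄ hx hc
  · obtain ⟨g, c, x, hgc, hx, hc⟩ :=
      exists_primitive_orthogonal (w := w) hrow (by
        simp only [w, dotProduct_cons, head_cons, tail_cons, dotProduct_of_isEmpty]
        linear_combination h)
    rw [show p₁₂ = g * c 0 from congrFun hgc 0, show p₁₃ = g * c 1 from congrFun hgc 1,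
      show p₁₄ = g * c 2 from congrFun hgc 2]
    exact isMinorSextuple_of_dotProduct_eq_one g p₂₃ p₂₄ p₃₄ hx hc

theorem segment_add_segment_eq_image (x y : ℝ × ℝ) :
    segment ℝ 0 x + segment ℝ 0 y =
      toLin (Module.Basis.finTwoProd ℝ) (Module.Basis.finTwoProd ℝ) !![x.1, y.1; x.2, y.2] ''
        Set.Icc 0 1 ×ˢ Set.Icc 0 1 := by
  rw [segment_eq_image, segment_eq_image, ← Set.image2_add, Set.image2_image_left,
    Set.image2_image_right, ← Set.image_prod]
  congr 1
  ext p <;>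
  · simp only [smul_zero, zero_add, Prod.fst_add, Prod.snd_add, Prod.smul_fst, Prod.smul_snd,
      smul_eq_mul, toLin_finTwoProd_apply]
    ring

theorem volume_segment_add_segment (x y : ℝ × ℝ) :
    volume (segment ℝ 0 x + segment ℝ 0 y) = ENNReal.ofReal |det2 x y| := by
  rw [segment_add_segment_eq_image, Measure.addHaar_image_linearMap, LinearMap.det_toLin,
    det_fin_two_of, mul_comm y.1, Measure.volume_eq_prod, Measure.prod_prod, Real.volume_Icc]
  simp [det2]

theorem volume_segment (x : ℝ × ℝ) : volume (segment ℝ 0 x) = 0 := by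
  simpa [det2] using volume_segment_add_segment x 0

theorem mixedArea_segment (x y : ℝ × ℝ) :
    mixedArea (segment ℝ 0 x) (segment ℝ 0 y) = |det2 x y| := by
  simp [mixedArea, volume_segment_add_segment, volume_segment]

theorem isLatticeSegment_segment (a : ℤ × ℤ) :
    IsLatticeSegment (segment ℝ 0 (latticeEmbed a)) :=
  ⟨0, a, by rw [convexHull_pair]; simp [latticeEmbed, Prod.mk_zero_zero]⟩

theorem mixedArea_segment_latticeEmbed_s14 (a b : ℤ × ℤ) :
    mixedArea (segment ℝ 0 (latticeEmbed a)) (segment ℝ 0 (latticeEmbed b)) =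
      (det2 a b).natAbs := by
  simp [mixedArea_segment, det2, latticeEmbed]

theorem exists_latticeSegments_of_isMinorSextuple {p₁₂ p₁₃ p₁₄ p₂₃ p₂₄ p₃₄ : ℤ}
    (h : IsMinorSextuple p₁₂ p₁₃ p₁₄ p₂₃ p₂₄ p₃₄) :
    ∃ P₁ P₂ P₃ P₄ : Set (ℝ × ℝ),
      IsLatticeSegment P₁ ∧ IsLatticeSegment P₂ ∧
      IsLatticeSegment P₃ ∧ IsLatticeSegment P₄ ∧
      mixedArea P₁ P₂ = p₁₂.natAbs ∧ mixedArea P₁ P₃ = p₁₃.natAbs ∧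
      mixedArea P₁ P₄ = p₁₄.natAbs ∧ mixedArea P₂ P₃ = p₂₃.natAbs ∧
      mixedArea P₂ P₄ = p₂₄.natAbs ∧ mixedArea P₃ P₄ = p₃₄.natAbs := by
  obtain ⟨u₁, u₂, u₃, u₄, rfl, rfl, rfl, rfl, rfl, rfl⟩ := h
  exact ⟨_, _, _, _, isLatticeSegment_segment u₁, isLatticeSegment_segment u₂,
    isLatticeSegment_segment u₃, isLatticeSegment_segment u₄,
    mixedArea_segment_latticeEmbed_s14 .., mixedArea_segment_latticeEmbed_s14 ..,
    mixedArea_segment_latticeEmbed_s14 .., mixedArea_segment_latticeEmbed_s14 ..,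
    mixedArea_segment_latticeEmbed_s14 .., mixedArea_segment_latticeEmbed_s14 ..⟩

theorem boundary_realizable_general (v₁₂ v₁₃ v₁₄ v₂₃ v₂₄ v₃₄ : ℕ)
    (hbd : v₁₂ * v₃₄ + v₁₃ * v₂₄ = v₁₄ * v₂₃ ∨
           v₁₃ * v₂₄ + v₁₄ * v₂₃ = v₁₂ * v₃₄ ∨
           v₁₄ * v₂₃ + v₁₂ * v₃₄ = v₁₃ * v₂₄) :
    ∃ P₁ P₂ P₃ P₄ : Set (ℝ × ℝ),
      IsLatticeSegment P₁ ∧ IsLatticeSegment P₂ ∧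
      IsLatticeSegment P₃ ∧ IsLatticeSegment P₄ ∧
      mixedArea P₁ P₂ = (v₁₂ : ℝ) ∧ mixedArea P₁ P₃ = (v₁₃ : ℝ) ∧
      mixedArea P₁ P₄ = (v₁₄ : ℝ) ∧ mixedArea P₂ P₃ = (v₂₃ : ℝ) ∧
      mixedArea P₂ P₄ = (v₂₄ : ℝ) ∧ mixedArea P₃ P₄ = (v₃₄ : ℝ) := by
  obtain ⟨p₂₃, p₂₄, rfl, rfl, hpl⟩ : ∃ p₂₃ p₂₄ : ℤ, p₂₃.natAbs = v₂₃ ∧ p₂₄.natAbs = v₂₄ ∧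
      (v₁₂ : ℤ) * v₃₄ - v₁₃ * p₂₄ + v₁₄ * p₂₃ = 0 := by
    zify at hbd
    rcases hbd with h | h | h
    · exact ⟨-v₂₃, -v₂₄, by simp, by simp, by linear_combination h⟩
    · exact ⟨-v₂₃, v₂₄, by simp, by simp, by linear_combination -h⟩
    · exact ⟨v₂₃, v₂₄, by simp, by simp, by linear_combination h⟩
  simpa using exists_latticeSegments_of_isMinorSextuple (isMinorSextuple_of_plucker hpl)

/-- Every boundary point of the discrete Plücker set (a tuple of non-negative integers
satisfying the Plücker-type inequalities, at least one with equality) is realized by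
four lattice segments. -/
theorem boundary_realizable (v₁₂ v₁₃ v₁₄ v₂₃ v₂₄ v₃₄ : ℕ)
    (hpl₁ : v₁₄ * v₂₃ ≤ v₁₂ * v₃₄ + v₁₃ * v₂₄)
    (hpl₂ : v₁₂ * v₃₄ ≤ v₁₃ * v₂₄ + v₁₄ * v₂₃)
    (hpl₃ : v₁₃ * v₂₄ ≤ v₁₄ * v₂₃ + v₁₂ * v₃₄)
    (hbd : v₁₂ * v₃₄ + v₁₃ * v₂₄ = v₁₄ * v₂₃ ∨
           v₁₃ * v₂₄ + v₁₄ * v₂₃ = v₁₂ * v₃₄ ∨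
           v₁₄ * v₂₃ + v₁₂ * v₃₄ = v₁₃ * v₂₄) :
    ∃ P₁ P₂ P₃ P₄ : Set (ℝ × ℝ),
      IsLatticeSegment P₁ ∧ IsLatticeSegment P₂ ∧
      IsLatticeSegment P₃ ∧ IsLatticeSegment P₄ ∧
      mixedArea P₁ P₂ = (v₁₂ : ℝ) ∧ mixedArea P₁ P₃ = (v₁₃ : ℝ) ∧
      mixedArea P₁ P₄ = (v₁₄ : ℝ) ∧ mixedArea P₂ P₃ = (v₂₃ : ℝ) ∧
      mixedArea P₂ P₄ = (v₂₄ : ℝ) ∧ mixedArea P₃ P₄ = (v₃₄ : ℝ) :=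
  boundary_realizable_general v₁₂ v₁₃ v₁₄ v₂₃ v₂₄ v₃₄ hbd
end
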